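/- Completeness of the axiomatic system: if ⟨δ⟩ρ ⊣▲ ⟨γ⟩σ and ⟨δ'⟩ρ' ⊣▲ ⟨γ'⟩σ' holds for every ⟨δ'⟩ρ' ⊣≺ ⟨γ'⟩σ' ∈ Γ, then Γ ⊳ ⟨δ⟩ρ ⊣≺ ⟨γ⟩σ is derivable. -/

import Mathlib

/-- Session behaviours with checkpoints (recursion-free fragment):
`one` is success, `ext ck br` an external choice (checkpointed when `ck = true`),
`int ck br` an internal choice over conames (checkpointed when `ck = true`). -/
inductive SB : Type
  | one : SB
  | ext : Bool → List (ℕ × SB) → SB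
  | int : Bool → List (ℕ × SB) → SB

namespace SB

/-- Duality: exchange names/conames and external/internal choices, preserving checkpoints. -/
def dual : SB → SB
  | .one => .one
  | .ext c br => .int c (br.attach.map (fun p => (p.1.1, dual p.1.2)))
  | .int c br => .ext c (br.attach.map (fun p => (p.1.1, dual p.1.2)))
decreasing_by
  all_goals
    simp_wf
    cases p with | mk v h =>
      have := List.sizeOf_lt_of_mem h
      cases v; simp_all; omega

/-- Erase all checkpoint markers. -/
def erase : SB → SB
  | .one => .one
  | .ext _ br => .ext false (br.attach.map (fun p => (p.1.1, erase p.1.2)))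
  | .int _ br => .int false (br.attach.map (fun p => (p.1.1, erase p.1.2)))
decreasing_by
  all_goals
    simp_wf
    cases p with | mk v h =>
      have := List.sizeOf_lt_of_mem h
      cases v; simp_all; omega

/-- Names heading the top-level external choice (looking through a checkpoint). -/
def sumacts : SB → Finset ℕ
  | .ext _ br => (br.map Prod.fst).toFinset
  | _ => ∅

/-- Names of the conames heading the top-level internal choice. -/
def oplusacts : SB → Finset ℕ
  | .int _ br => (br.map Prod.fst).toFinset
  | _ => ∅

/-- Does the behaviour start with a checkpoint ▲ ? -/
def hasCk : SB → Bool
  | .ext c _ => c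
  | .int c _ => c
  | .one => false

/-- σ ∈ 𝒮▲ : σ starts with a checkpoint. -/
def Ckpt (s : SB) : Prop := s.hasCk = true

/-- Checkpoint-free behaviours. -/
inductive CkFree : SB → Prop
  | one : CkFree .one
  | ext : ∀ {br}, (∀ p ∈ br, CkFree (Prod.snd p)) → CkFree (.ext false br)
  | int : ∀ {br}, (∀ p ∈ br, CkFree (Prod.snd p)) → CkFree (.int false br)

/-- Well-formed behaviours: all choices are non-empty with pairwise distinct names. -/
inductive WF : SB → Prop
  | one : WF .one
  | ext : ∀ {c br}, br ≠ [] → (br.map Prod.fst).Nodup →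
      (∀ p ∈ br, WF (Prod.snd p)) → WF (.ext c br)
  | int : ∀ {c br}, br ≠ [] → (br.map Prod.fst).Nodup →
      (∀ p ∈ br, WF (Prod.snd p)) → WF (.int c br)

end SB

/-- Action labels: names and conames. -/
inductive Lab : Type
  | name (a : ℕ)
  | coname (a : ℕ)

/-- The LTS on configurations ⟨γ⟩σ, where the past γ is `none` (= ∘) or `some` behaviour.
Rules (+), (⊕) and (▲) of the paper. -/
inductive Step : Option SB → SB → Lab → Option SB → SB → Prop
  | ext {γ a s br} : (a, s) ∈ br → Step γ (.ext false br) (.name a) γ s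
  | int {γ a s br} : (a, s) ∈ br → Step γ (.int false br) (.coname a) γ s
  | ckExt {γ a s br} : (a, s) ∈ br →
      Step γ (.ext true br) (.name a) (some (.ext true br)) s
  | ckInt {γ a s br} : (a, s) ∈ br →
      Step γ (.int true br) (.coname a) (some (.int true br)) s

/-- The function b(γ, σ): returns σ if it is checkpointed, γ otherwise. -/
def bfun (γ : Option SB) (s : SB) : Option SB := if s.hasCk then some s else γ

/-- Configurations ⟨γ⟩σ. -/
abbrev Config := Option SB × SB

inductive PLab : Type
  | tau
  | rbk

/-- Communication reduction of client/server pairs: τ-synchronisation of dual actions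
(with side condition oplusacts ⊆ sumacts of the partner) and synchronous rollback. -/
inductive PStep : Config → Config → PLab → Config → Config → Prop
  | comL {δ ρ γ σ δ' ρ' γ' σ' a} :
      Step δ ρ (.name a) δ' ρ' → Step γ σ (.coname a) γ' σ' →
      σ.oplusacts ⊆ ρ.sumacts → PStep (δ, ρ) (γ, σ) .tau (δ', ρ') (γ', σ')
  | comR {δ ρ γ σ δ' ρ' γ' σ' a} :
      Step δ ρ (.coname a) δ' ρ' → Step γ σ (.name a) γ' σ' →
      ρ.oplusacts ⊆ σ.sumacts → PStep (δ, ρ) (γ, σ) .tau (δ', ρ') (γ', σ')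
  | rbk {d ρ g σ} : PStep (some d, ρ) (some g, σ) .rbk (none, d) (none, g)

/-- The functional H whose greatest fixed point is checkpoint compliance. -/
def Hfun (R : Config → Config → Prop) (p q : Config) : Prop :=
  ((¬ ∃ p' q', PStep p q .tau p' q') →
      p.2 = .one ∧ ((p.1 = none ∧ q.1 = none) ∨
        (∃ d g, p.1 = some d ∧ q.1 = some g ∧ SB.Ckpt d ∧ SB.Ckpt g)))
  ∧ (∀ β p' q', PStep p q β p' q' → R p' q')

/-- Checkpoint compliance ⊣▲ : the greatest fixed point of H, i.e. the union of all
checkpoint compliance relations R ⊆ H(R). -/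
def CkCompl (p q : Config) : Prop :=
  ∃ R : Config → Config → Prop, (∀ x y, R x y → Hfun R x y) ∧ R p q

/-- The formal (axiomatic) system for checkpoint compliance, with judgments
Γ ⊳ ⟨δ⟩ρ ⊣≺ ⟨γ⟩σ; rules (Hyp), (Ax), (+·⊕) and (⊕·+). -/
inductive Deriv : List (Config × Config) → Config → Config → Prop
  | hyp {Γ p q} : (p, q) ∈ Γ → Deriv Γ p q
  | axNil {Γ σ} : Deriv Γ (none, .one) (none, σ)
  | axBk {Γ d g σ} : SB.Ckpt d → SB.Ckpt g → Deriv Γ (none, d) (none, g) →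
      Deriv Γ (some d, .one) (some g, σ)
  | extInt {Γ δ γ c₁ c₂ brρ brσ} :
      brσ ≠ [] →
      (∀ a sj, (a, sj) ∈ brσ → ∃ rj, (a, rj) ∈ brρ) →
      (∀ a sj rj, (a, sj) ∈ brσ → (a, rj) ∈ brρ →
        Deriv (((δ, SB.ext c₁ brρ), (γ, SB.int c₂ brσ)) :: Γ)
          (bfun δ (SB.ext c₁ brρ), rj) (bfun γ (SB.int c₂ brσ), sj)) →
      (∀ d g, δ = some d → γ = some g →
        Deriv (((δ, SB.ext c₁ brρ), (γ, SB.int c₂ brσ)) :: Γ) (none, d) (none, g)) →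
      Deriv Γ (δ, SB.ext c₁ brρ) (γ, SB.int c₂ brσ)
  | intExt {Γ δ γ c₁ c₂ brρ brσ} :
      brρ ≠ [] →
      (∀ a ri, (a, ri) ∈ brρ → ∃ si, (a, si) ∈ brσ) →
      (∀ a ri si, (a, ri) ∈ brρ → (a, si) ∈ brσ →
        Deriv (((δ, SB.int c₁ brρ), (γ, SB.ext c₂ brσ)) :: Γ)
          (bfun δ (SB.int c₁ brρ), ri) (bfun γ (SB.ext c₂ brσ), si)) →
      (∀ d g, δ = some d → γ = some g →
        Deriv (((δ, SB.int c₁ brρ), (γ, SB.ext c₂ brσ)) :: Γ) (none, d) (none, g)) →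
      Deriv Γ (δ, SB.int c₁ brρ) (γ, SB.ext c₂ brσ)

/-- Standard (checkpoint-free) session behaviours, with an explicit committed
coname prefix `pre a σ` (= ā.σ) arising after a silent internal choice. -/
inductive PB : Type
  | one : PB
  | ext : List (ℕ × PB) → PB
  | int : List (ℕ × PB) → PB
  | pre : ℕ → PB → PB

/-- Erasure of checkpointed behaviours into standard ones. -/
def SB.toPB : SB → PB
  | .one => .one
  | .ext _ br => .ext (br.attach.map (fun p => (p.1.1, SB.toPB p.1.2)))
  | .int _ br => .int (br.attach.map (fun p => (p.1.1, SB.toPB p.1.2)))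
decreasing_by
  all_goals
    simp_wf
    cases p with | mk v h =>
      have := List.sizeOf_lt_of_mem h
      cases v; simp_all; omega

/-- Standard reduction of client/server pairs: an internal choice silently commits to
a branch, then the committed coname synchronises with a matching external choice. -/
inductive SRed : PB × PB → PB × PB → Prop
  | intL {br σ a s} : (a, s) ∈ br → SRed (.int br, σ) (.pre a s, σ)
  | intR {ρ br a s} : (a, s) ∈ br → SRed (ρ, .int br) (ρ, .pre a s)
  | comL {br a r s} : (a, r) ∈ br → SRed (.ext br, .pre a s) (r, s)
  | comR {br a r s} : (a, s) ∈ br → SRed (.pre a r, .ext br) (r, s)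

/-- A pair is stuck if no standard reduction applies. -/
def StdStuck (p : PB × PB) : Prop := ¬ ∃ q, SRed p q

/-- Standard compliance ρ ⊣ σ : every stuck reduct of ρ ∥ σ has client 1. -/
def StdCompl (ρ σ : PB) : Prop :=
  ∀ p, Relation.ReflTransGen SRed (ρ, σ) p → StdStuck p → p.1 = PB.one

/-!
Starting from a compliant pair, the derivation is built backwards along the transitions of
the pair: the rules (+·⊕) and (⊕·+) have one premise for each τ-reduct and one for the
rollback, and compliance is preserved by every reduct. Each application of these rules adds
the current judgment to the context, so the search stops through (Hyp) at the latest when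
every judgment over the finitely many subterms of the initial behaviours has been recorded.
-/

namespace SB

def branches : SB → List (ℕ × SB)
  | .one => []
  | .ext _ br => br
  | .int _ br => br

def subterms : SB → List SB
  | .one => [.one]
  | .ext c br => .ext c br :: br.attach.flatMap (fun p => subterms p.1.2)
  | .int c br => .int c br :: br.attach.flatMap (fun p => subterms p.1.2)
decreasing_by
  all_goals
    simp_wf
    cases p with | mk v h =>
      have := List.sizeOf_lt_of_mem h
      cases v; simp_all; omega

theorem mem_subterms_self (t : SB) : t ∈ t.subterms := by
  cases t <;> simp [subterms]

theorem mem_subterms_of_mem_branches {s : SB} {a : ℕ} {r : SB} (h : (a, r) ∈ s.branches) :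
    r ∈ s.subterms := by
  cases s with
  | one => cases h
  | ext c br | int c br =>
    rw [subterms]
    exact List.mem_cons_of_mem _
      (List.mem_flatMap.2 ⟨⟨(a, r), h⟩, List.mem_attach _ _, mem_subterms_self r⟩)

theorem subterms_subset_of_mem {s t : SB} (h : s ∈ t.subterms) : s.subterms ⊆ t.subterms := by
  induction t using subterms.induct generalizing s with
  | case1 =>
    rw [subterms, List.mem_singleton] at h
    exact h ▸ List.Subset.refl _
  | case2 c br ih | case3 c br ih =>
    rw [subterms, List.mem_cons, List.mem_flatMap] at h
    rcases h with rfl | ⟨p, hp, hs⟩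
    · exact List.Subset.refl _
    · rw [subterms]
      exact fun x hx => List.mem_cons_of_mem _ (List.mem_flatMap.2 ⟨p, hp, ih p hs hx⟩)

theorem Ckpt.ne_one {d : SB} (h : d.Ckpt) : d ≠ .one := by
  rintro rfl
  cases h

theorem exists_mem_of_oplusacts_subset_sumacts {c c' : Bool} {br br' : List (ℕ × SB)}
    (h : (SB.int c br).oplusacts ⊆ (SB.ext c' br').sumacts) :
    ∀ a s, (a, s) ∈ br → ∃ r, (a, r) ∈ br' := by
  intro a s hs
  have ha : a ∈ (SB.ext c' br').sumacts :=
    h (List.mem_toFinset.2 (List.mem_map_of_mem (f := Prod.fst) hs))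
  obtain ⟨⟨_, r⟩, hr, rfl⟩ := List.mem_map.1 (List.mem_toFinset.1 ha)
  exact ⟨r, hr⟩

end SB

def BranchClosed (T : Set SB) : Prop :=
  ∀ ⦃s a r⦄, s ∈ T → (a, r) ∈ s.branches → r ∈ T

theorem branchClosed_flatMap_subterms (l : List SB) :
    BranchClosed {s | s ∈ l.flatMap SB.subterms} := by
  intro s a r hs hr
  obtain ⟨t, ht, hst⟩ := List.mem_flatMap.1 hs
  exact List.mem_flatMap.2
    ⟨t, ht, SB.subterms_subset_of_mem hst (SB.mem_subterms_of_mem_branches hr)⟩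

def configsIn (T : Set SB) : Set Config :=
  {p | (∀ d ∈ p.1, d ∈ T) ∧ p.2 ∈ T}

theorem configsIn_finite {T : Set SB} (hT : T.Finite) : (configsIn T).Finite := by
  refine (((hT.image some).insert none).prod hT).subset ?_
  rintro ⟨δ | d, s⟩ ⟨hδ, hs⟩
  · exact ⟨Set.mem_insert _ _, hs⟩
  · exact ⟨Set.mem_insert_of_mem _ ⟨d, hδ d rfl, rfl⟩, hs⟩

theorem Step.mem_configsIn {T : Set SB} (hT : BranchClosed T) {γ : Option SB} {σ : SB}
    {l : Lab} {γ' : Option SB} {σ' : SB} (hs : Step γ σ l γ' σ')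
    (h : (γ, σ) ∈ configsIn T) : (γ', σ') ∈ configsIn T := by
  obtain ⟨hγ, hσ⟩ := h
  cases hs with
  | ext hm | int hm => exact ⟨hγ, hT hσ hm⟩
  | ckExt hm | ckInt hm => exact ⟨fun d hd => Option.some_inj.1 hd ▸ hσ, hT hσ hm⟩

theorem PStep.mem_configsIn {T : Set SB} (hT : BranchClosed T) {p q : Config} {β : PLab}
    {p' q' : Config} (hs : PStep p q β p' q') (hp : p ∈ configsIn T) (hq : q ∈ configsIn T) :
    p' ∈ configsIn T ∧ q' ∈ configsIn T := by
  cases hs with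
  | comL h₁ h₂ _ | comR h₁ h₂ _ => exact ⟨h₁.mem_configsIn hT hp, h₂.mem_configsIn hT hq⟩
  | rbk => exact ⟨⟨nofun, hp.1 _ rfl⟩, ⟨nofun, hq.1 _ rfl⟩⟩

noncomputable def unrecorded (T : Set SB) (Γ : List (Config × Config)) : ℕ :=
  (configsIn T ×ˢ configsIn T \ {x | x ∈ Γ}).ncard

theorem unrecorded_cons_lt {T : Set SB} (hT : T.Finite) {Γ : List (Config × Config)}
    {p q : Config} (hp : p ∈ configsIn T) (hq : q ∈ configsIn T) (hpq : (p, q) ∉ Γ) :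
    unrecorded T ((p, q) :: Γ) < unrecorded T Γ := by
  have hdiff : configsIn T ×ˢ configsIn T \ {x | x ∈ (p, q) :: Γ} =
      (configsIn T ×ˢ configsIn T \ {x | x ∈ Γ}) \ {(p, q)} := by
    ext x
    simp only [List.mem_cons, Set.mem_sdiff, Set.mem_ofPred_eq, Set.mem_singleton_iff]
    tauto
  rw [unrecorded, unrecorded, hdiff]
  exact Set.ncard_sdiff_singleton_lt_of_mem ⟨⟨hp, hq⟩, hpq⟩
    (((configsIn_finite hT).prod (configsIn_finite hT)).sdiff)

theorem step_ext_bfun (δ : Option SB) {c : Bool} {br : List (ℕ × SB)} {a : ℕ} {r : SB}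
    (h : (a, r) ∈ br) : Step δ (SB.ext c br) (.name a) (bfun δ (SB.ext c br)) r := by
  cases c
  · exact Step.ext h
  · exact Step.ckExt h

theorem step_int_bfun (δ : Option SB) {c : Bool} {br : List (ℕ × SB)} {a : ℕ} {r : SB}
    (h : (a, r) ∈ br) : Step δ (SB.int c br) (.coname a) (bfun δ (SB.int c br)) r := by
  cases c
  · exact Step.int h
  · exact Step.ckInt h

theorem PStep.tau_ext_left {δ γ : Option SB} {c₁ : Bool} {brρ : List (ℕ × SB)} {σ : SB}
    {p' q' : Config} (hs : PStep (δ, .ext c₁ brρ) (γ, σ) .tau p' q') :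
    ∃ c₂ brσ, σ = .int c₂ brσ ∧ brσ ≠ [] ∧
      (SB.int c₂ brσ).oplusacts ⊆ (SB.ext c₁ brρ).sumacts := by
  cases hs with
  | comL _ hσ hsub =>
    cases hσ with
    | int hm | ckInt hm => exact ⟨_, _, rfl, List.ne_nil_of_mem hm, hsub⟩
  | comR hρ => cases hρ

theorem PStep.tau_int_left {δ γ : Option SB} {c₁ : Bool} {brρ : List (ℕ × SB)} {σ : SB}
    {p' q' : Config} (hs : PStep (δ, .int c₁ brρ) (γ, σ) .tau p' q') :
    ∃ c₂ brσ, σ = .ext c₂ brσ ∧ brρ ≠ [] ∧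
      (SB.int c₁ brρ).oplusacts ⊆ (SB.ext c₂ brσ).sumacts := by
  cases hs with
  | comL hρ => cases hρ
  | comR hρ hσ hsub =>
    cases hσ with
    | ext | ckExt => cases hρ with
      | int hm | ckInt hm => exact ⟨_, _, rfl, List.ne_nil_of_mem hm, hsub⟩

theorem CkCompl.hfun {p q : Config} (h : CkCompl p q) : Hfun CkCompl p q := by
  obtain ⟨R, hR, hpq⟩ := h
  exact ⟨(hR p q hpq).1, fun β p' q' hs => ⟨R, hR, (hR p q hpq).2 β p' q' hs⟩⟩

theorem CkCompl.exists_tau {p q : Config} (h : CkCompl p q) (hρ : p.2 ≠ .one) :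
    ∃ p' q', PStep p q .tau p' q' := by
  by_contra hst
  exact hρ (h.hfun.1 hst).1

theorem Deriv.of_ckCompl_one {Γ : List (Config × Config)} {δ γ : Option SB} {σ : SB}
    (h : CkCompl (δ, .one) (γ, σ))
    (hrbk : ∀ d g, δ = some d → γ = some g → d.Ckpt → Deriv Γ (none, d) (none, g)) :
    Deriv Γ (δ, .one) (γ, σ) := by
  have hst : ¬ ∃ p' q', PStep (δ, .one) (γ, σ) .tau p' q' := by
    rintro ⟨p', q', hs⟩
    cases hs with
    | comL hρ | comR hρ => cases hρ
  obtain ⟨-, ⟨rfl, rfl⟩ | ⟨d, g, rfl, rfl, hd, hg⟩⟩ := h.hfun.1 hst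
  · exact .axNil
  · exact .axBk hd hg (hrbk d g rfl rfl hd)

theorem Deriv.of_ckCompl_of_reducts {Γ : List (Config × Config)} {p q : Config}
    (h : CkCompl p q) (hρ : p.2 ≠ .one)
    (ih : ∀ β p' q', PStep p q β p' q' → Deriv ((p, q) :: Γ) p' q') : Deriv Γ p q := by
  obtain ⟨p', q', hs⟩ := h.exists_tau hρ
  obtain ⟨δ, ρ⟩ := p
  obtain ⟨γ, σ⟩ := q
  have hrbk : ∀ d g, δ = some d → γ = some g →
      Deriv (((δ, ρ), (γ, σ)) :: Γ) (none, d) (none, g) := by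
    rintro d g rfl rfl
    exact ih _ _ _ .rbk
  cases ρ with
  | one => exact absurd rfl hρ
  | ext c₁ brρ =>
    obtain ⟨c₂, brσ, rfl, hne, hsub⟩ := hs.tau_ext_left
    exact .extInt hne (SB.exists_mem_of_oplusacts_subset_sumacts hsub)
      (fun _ _ _ hsj hrj => ih _ _ _ (.comL (step_ext_bfun δ hrj) (step_int_bfun γ hsj) hsub))
      hrbk
  | int c₁ brρ =>
    obtain ⟨c₂, brσ, rfl, hne, hsub⟩ := hs.tau_int_left
    exact .intExt hne (SB.exists_mem_of_oplusacts_subset_sumacts hsub)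
      (fun _ _ _ hri hsi => ih _ _ _ (.comR (step_int_bfun δ hri) (step_ext_bfun γ hsi) hsub))
      hrbk

theorem Deriv.of_ckCompl_of_mem_configsIn {T : Set SB} (hfin : T.Finite) (hT : BranchClosed T)
    (Γ : List (Config × Config)) {p q : Config} (hp : p ∈ configsIn T) (hq : q ∈ configsIn T)
    (h : CkCompl p q) : Deriv Γ p q := by
  induction hn : unrecorded T Γ using Nat.strong_induction_on generalizing Γ p q with
  | _ n ih =>
    have of_ne_one : ∀ {p q : Config}, p.2 ≠ .one → p ∈ configsIn T → q ∈ configsIn T →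
        CkCompl p q → Deriv Γ p q := by
      intro p q hρ hp hq h
      by_cases hpq : (p, q) ∈ Γ
      · exact .hyp hpq
      refine Deriv.of_ckCompl_of_reducts h hρ fun β p' q' hs => ?_
      obtain ⟨hp', hq'⟩ := hs.mem_configsIn hT hp hq
      exact ih _ (hn ▸ unrecorded_cons_lt hfin hp hq hpq) _ hp' hq' (h.hfun.2 β p' q' hs) rfl
    obtain ⟨δ, ρ⟩ := p
    obtain ⟨γ, σ⟩ := q
    by_cases hρ : ρ = .one
    · -- (Ax) with checkpointed pasts keeps the context, but the rolled-back client is not `1`.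
      subst hρ
      refine Deriv.of_ckCompl_one h fun d g hd hg hck => ?_
      subst hd hg
      obtain ⟨hp', hq'⟩ := PStep.rbk.mem_configsIn hT hp hq
      exact of_ne_one hck.ne_one hp' hq' (h.hfun.2 _ _ _ .rbk)
    · exact of_ne_one hρ hp hq h

theorem mem_configsIn_flatMap_subterms {l : List SB} {p : Config} (hδ : ∀ d ∈ p.1, d ∈ l)
    (hρ : p.2 ∈ l) : p ∈ configsIn {s | s ∈ l.flatMap SB.subterms} :=
  ⟨fun d hd => List.mem_flatMap.2 ⟨d, hδ d hd, SB.mem_subterms_self d⟩,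
    List.mem_flatMap.2 ⟨p.2, hρ, SB.mem_subterms_self p.2⟩⟩

theorem completeness_general (Γ : List (Config × Config)) (p q : Config)
    (h : CkCompl p q) :
    Deriv Γ p q := by
  let roots := p.2 :: q.2 :: (p.1.toList ++ q.1.toList)
  have hp : p ∈ configsIn {s | s ∈ roots.flatMap SB.subterms} :=
    mem_configsIn_flatMap_subterms (by simp +contextual [roots]) (by simp [roots])
  have hq : q ∈ configsIn {s | s ∈ roots.flatMap SB.subterms} :=
    mem_configsIn_flatMap_subterms (by simp +contextual [roots]) (by simp [roots])
  exact Deriv.of_ckCompl_of_mem_configsIn (List.finite_toSet _)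
    (branchClosed_flatMap_subterms roots) Γ hp hq h

/-- completeness of the axiomatic system with respect to ⊣▲. -/
theorem completeness (Γ : List (Config × Config)) (p q : Config)
    (h : CkCompl p q) (hΓ : ∀ r s, (r, s) ∈ Γ → CkCompl r s) :
    Deriv Γ p q :=
  completeness_general Γ p q h
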